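/- Let H be the complex (2n+1)-dimensional Heisenberg Lie algebra with basis {e_{-n},…,e_{-1},e_0,e_1,…,e_n} (n ≥ 1) and nonzero brackets [e_{-i},e_i] = e_0 = -[e_i,e_{-i}] for i = 1,…,n (all other basis brackets zero). Then the linear map ∇ defined on the basis by ∇(e_0) = 2e_0 and ∇(e_i) = e_i for i ≠ 0 is a local automorphism of H but is not an automorphism of H. -/

import Mathlib

def mkLieEquiv {R L : Type*} [CommRing R] [LieRing L] [LieAlgebra R L]
    (φ : L ≃ₗ[R] L) (h : ∀ x y : L, φ ⁅x, y⁆ = ⁅φ x, φ y⁆) : L ≃ₗ⁅R⁆ L :=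
  { φ with map_lie' := fun {x y} => h x y }

@[simp] lemma mkLieEquiv_apply {R L : Type*} [CommRing R] [LieRing L] [LieAlgebra R L]
    (φ : L ≃ₗ[R] L) (h : ∀ x y : L, φ ⁅x, y⁆ = ⁅φ x, φ y⁆) (x : L) :
    mkLieEquiv φ h x = φ x := rfl

lemma sum_lie' {L : Type*} [LieRing L] {ι : Type*} (s : Finset ι) (f : ι → L) (y : L) :
    ⁅(∑ i ∈ s, f i), y⁆ = ∑ i ∈ s, ⁅f i, y⁆ := by
  classical
  induction s using Finset.induction with
  | empty => simp
  | insert _ _ h ih => rw [Finset.sum_insert h, Finset.sum_insert h, add_lie, ih]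

lemma lie_sum' {L : Type*} [LieRing L] {ι : Type*} (s : Finset ι) (f : ι → L) (y : L) :
    ⁅y, (∑ i ∈ s, f i)⁆ = ∑ i ∈ s, ⁅y, f i⁆ := by
  classical
  induction s using Finset.induction with
  | empty => simp
  | insert _ _ h ih => rw [Finset.sum_insert h, Finset.sum_insert h, lie_add, ih]

noncomputable instance instFinIdx (n : ℕ) : Fintype {i : ℤ // i.natAbs ≤ n} :=
  Fintype.subtype (Finset.Icc (-(n:ℤ)) (n:ℤ)) (fun i => by
    simp only [Finset.mem_Icc]; omega)

/-- On the complex `(2n+1)`-dimensional Heisenberg Lie algebra with basis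
`{e_{-n},…,e_0,…,e_n}` and nonzero brackets `[e_{-i}, e_i] = e_0` for `1 ≤ i ≤ n`,
the linear map `T` with `T(e_0) = 2e_0` and `T(e_i) = e_i` for `i ≠ 0` is a local
automorphism but not an automorphism. -/
theorem stmt_14 (n : ℕ) (hn : 1 ≤ n)
    (H : Type*) [LieRing H] [LieAlgebra ℂ H]
    (e : Module.Basis {i : ℤ // i.natAbs ≤ n} ℂ H)
    (hbr : ∀ i : ℤ, ∀ h1 : 1 ≤ i, ∀ h2 : i ≤ (n : ℤ),
      ⁅e ⟨-i, by omega⟩, e ⟨i, by omega⟩⁆ = e ⟨0, by omega⟩)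
    (hzero : ∀ i j : {i : ℤ // i.natAbs ≤ n}, (i : ℤ) + (j : ℤ) ≠ 0 → ⁅e i, e j⁆ = 0)
    (T : H →ₗ[ℂ] H)
    (hT0 : T (e ⟨0, by omega⟩) = (2 : ℂ) • e ⟨0, by omega⟩)
    (hT : ∀ i : {i : ℤ // i.natAbs ≤ n}, (i : ℤ) ≠ 0 → T (e i) = e i) :
    (∀ x : H, ∃ φ : H ≃ₗ⁅ℂ⁆ H, T x = φ x) ∧
    ¬ (Function.Bijective T ∧ ∀ x y : H, T ⁅x, y⁆ = ⁅T x, T y⁆) := by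
  classical
  have h00 : ((0:ℤ)).natAbs ≤ n := by omega
  set i0 : {i : ℤ // i.natAbs ≤ n} := ⟨0, h00⟩ with hi0
  set e0 : H := e i0 with he0
  have hT0' : T e0 = (2:ℂ) • e0 := hT0
  -- e0 is central
  have hcb : ∀ i : {i : ℤ // i.natAbs ≤ n}, ⁅e0, e i⁆ = 0 := by
    intro i
    by_cases hi : (i : ℤ) = 0
    · have : i = i0 := Subtype.ext hi
      rw [this]; exact lie_self _
    · exact hzero i0 i (by simpa [hi0] using hi)
  have hc : ∀ x : H, ⁅e0, x⁆ = 0 := by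
    intro x
    rw [← e.sum_repr x, lie_sum']
    simp [lie_smul, hcb]
  have hc' : ∀ x : H, ⁅x, e0⁆ = 0 := fun x => by
    rw [← lie_skew, hc, neg_zero]
  -- bracket values on the basis
  have hbneg : ∀ i j : {i : ℤ // i.natAbs ≤ n}, (i:ℤ) < 0 → (i:ℤ) + (j:ℤ) = 0 → ⁅e i, e j⁆ = e0 := by
    intro i j h hij
    have hj1 : 1 ≤ (j:ℤ) := by omega
    have hj2 : (j:ℤ) ≤ (n:ℤ) := by have := j.2; omega
    have hb := hbr (j:ℤ) hj1 hj2
    have h1 : i = ⟨-(j:ℤ), by have := j.2; omega⟩ :=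
      Subtype.ext (show (i:ℤ) = -(j:ℤ) by omega)
    rw [h1]
    exact hb
  have hbpos : ∀ i j : {i : ℤ // i.natAbs ≤ n}, 0 < (i:ℤ) → (i:ℤ) + (j:ℤ) = 0 → ⁅e i, e j⁆ = -e0 := by
    intro i j h hij
    rw [← lie_skew, hbneg j i (by omega) (by omega)]
  have hspan : ∀ i j : {i : ℤ // i.natAbs ≤ n}, ∃ c : ℂ, ⁅e i, e j⁆ = c • e0 := by
    intro i j
    by_cases hij : (i:ℤ) + (j:ℤ) = 0
    · rcases lt_trichotomy (i:ℤ) 0 with h | h | h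
      · exact ⟨1, by rw [hbneg i j h hij, one_smul]⟩
      · have hi' : i = i0 := Subtype.ext h
        have hj' : j = i0 := Subtype.ext (show (j:ℤ) = 0 by omega)
        exact ⟨0, by rw [hi', hj', zero_smul]; exact lie_self _⟩
      · exact ⟨-1, by rw [hbpos i j h hij, neg_one_smul]⟩
    · exact ⟨0, by rw [zero_smul]; exact hzero i j hij⟩
  have hspanxy : ∀ x y : H, ∃ c : ℂ, ⁅x, y⁆ = c • e0 := by
    intro x y
    have hmem : ⁅x, y⁆ ∈ (Submodule.span ℂ {e0}) := by
      rw [← e.sum_repr x, ← e.sum_repr y, sum_lie']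
      apply Submodule.sum_mem; intro i _
      rw [smul_lie]; apply Submodule.smul_mem
      rw [lie_sum']
      apply Submodule.sum_mem; intro j _
      rw [lie_smul]; apply Submodule.smul_mem
      obtain ⟨c, hcc⟩ := hspan i j
      rw [hcc]
      exact Submodule.smul_mem _ _ (Submodule.mem_span_singleton_self _)
    obtain ⟨c, hcc⟩ := Submodule.mem_span_singleton.mp hmem
    exact ⟨c, hcc.symm⟩
  -- bilinear extension of bracket compatibility
  have bilin : ∀ (f : H →ₗ[ℂ] H), (∀ i j : {i : ℤ // i.natAbs ≤ n}, f ⁅e i, e j⁆ = ⁅f (e i), f (e j)⁆) →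
      ∀ x y : H, f ⁅x, y⁆ = ⁅f x, f y⁆ := by
    intro f hf x y
    rw [← e.sum_repr x, ← e.sum_repr y, sum_lie']
    simp only [smul_lie, lie_sum', lie_smul, map_sum, map_smul, hf, sum_lie',
      Finset.smul_sum]
    rw [Finset.sum_comm]
  -- T as identity plus e0-component
  have hTx : ∀ x : H, T x = x + (e.repr x i0) • e0 := by
    have hTeq : T = LinearMap.id + (e.coord i0).smulRight e0 := by
      apply e.ext
      intro i
      by_cases hi : i = i0
      · rw [hi]
        have h1 : (e.coord i0) (e i0) = (1:ℂ) := by simp [Module.Basis.coord_apply]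
        simp only [LinearMap.add_apply, LinearMap.id_apply, LinearMap.smulRight_apply,
          h1, one_smul]
        rw [← he0, hT0', two_smul]
      · have : e.repr (e i) i0 = 0 := by
          rw [Module.Basis.repr_self_apply, if_neg hi]
        simp only [LinearMap.add_apply, LinearMap.id_apply, LinearMap.smulRight_apply,
          Module.Basis.coord_apply, this, zero_smul, add_zero]
        exact hT i (fun h => hi (Subtype.ext h))
    intro x
    rw [hTeq]
    simp [Module.Basis.coord_apply]
  -- repr of e0 at nonzero index
  have hrepr0 : ∀ j : {i : ℤ // i.natAbs ≤ n}, j ≠ i0 → e.repr e0 j = 0 := by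
    intro j hj
    rw [he0, Module.Basis.repr_self_apply, if_neg (fun h => hj h.symm)]
  refine ⟨?_, ?_⟩
  · -- local automorphism
    intro x
    by_cases hall : ∀ i : {i : ℤ // i.natAbs ≤ n}, i ≠ i0 → e.repr x i = 0
    · -- x is a multiple of e0 : use a scaling automorphism
      set c0 : ℂ := e.repr x i0 with hc0
      have hx : x = c0 • e0 := by
        conv_lhs => rw [← e.sum_repr x]
        rw [Finset.sum_eq_single i0 (fun i _ hi => by rw [hall i hi, zero_smul])
          (fun h => absurd (Finset.mem_univ _) h)]
      set s : {i : ℤ // i.natAbs ≤ n} → ℂ := fun i => if 0 ≤ (i:ℤ) then 2 else 1 with hs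
      have hsne : ∀ i : {i : ℤ // i.natAbs ≤ n}, s i ≠ 0 := by
        intro i; by_cases h : 0 ≤ (i:ℤ) <;> simp [hs, h]
      have hs0 : s i0 = 2 := by simp only [hs]; exact if_pos (le_refl 0)
      set f : H →ₗ[ℂ] H := e.constr ℂ (fun i => s i • e i) with hf
      set g : H →ₗ[ℂ] H := e.constr ℂ (fun i => (s i)⁻¹ • e i) with hg
      have hfb : ∀ i : {i : ℤ // i.natAbs ≤ n}, f (e i) = s i • e i := fun i => e.constr_basis ℂ _ i
      have hgb : ∀ i : {i : ℤ // i.natAbs ≤ n}, g (e i) = (s i)⁻¹ • e i := fun i => e.constr_basis ℂ _ i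
      have hfg : f ∘ₗ g = LinearMap.id := by
        apply e.ext; intro i
        simp only [LinearMap.comp_apply, LinearMap.id_apply, hgb, map_smul, hfb,
          smul_smul, inv_mul_cancel₀ (hsne i), one_smul]
      have hgf : g ∘ₗ f = LinearMap.id := by
        apply e.ext; intro i
        simp only [LinearMap.comp_apply, LinearMap.id_apply, hfb, map_smul, hgb,
          smul_smul, mul_inv_cancel₀ (hsne i), one_smul]
      set φ : H ≃ₗ[ℂ] H := LinearEquiv.ofLinear f g hfg hgf with hφ
      have hbrf : ∀ i j : {i : ℤ // i.natAbs ≤ n}, f ⁅e i, e j⁆ = ⁅f (e i), f (e j)⁆ := by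
        intro i j
        rw [hfb, hfb, smul_lie, lie_smul, smul_smul]
        by_cases hij : (i:ℤ) + (j:ℤ) = 0
        · rcases lt_trichotomy (i:ℤ) 0 with h | h | h
          · have hsi : s i = 1 := by simp only [hs]; exact if_neg (by omega)
            have hsj : s j = 2 := by simp only [hs]; exact if_pos (by omega)
            rw [hbneg i j h hij, he0, hfb i0, hsi, hsj, hs0]
            norm_num
          · have hi' : i = i0 := Subtype.ext h
            have hj' : j = i0 := Subtype.ext (show (j:ℤ) = 0 by omega)
            rw [hi', hj', lie_self, map_zero, smul_zero]
          · have hsi : s i = 2 := by simp only [hs]; exact if_pos (by omega)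
            have hsj : s j = 1 := by simp only [hs]; exact if_neg (by omega)
            rw [hbpos i j h hij, map_neg, he0, hfb i0, hsi, hsj, hs0]
            norm_num [smul_neg]
        · rw [hzero i j hij, map_zero, smul_zero]
      refine ⟨mkLieEquiv φ (bilin f hbrf), ?_⟩
      show T x = φ x
      show T x = f x
      rw [hx, map_smul, map_smul, hT0', he0, hfb i0, hs0]
    · -- some other coordinate is nonzero : use a shear automorphism
      push_neg at hall
      obtain ⟨j0, hj0ne, hj0⟩ := hall
      set a : ℂ := e.repr x i0 / e.repr x j0 with ha
      set f : H →ₗ[ℂ] H := LinearMap.id + (e.coord j0).smulRight (a • e0) with hf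
      set g : H →ₗ[ℂ] H := LinearMap.id + (e.coord j0).smulRight (-(a • e0)) with hg
      have hfapp : ∀ y : H, f y = y + (e.repr y j0) • (a • e0) := by
        intro y
        simp [hf, LinearMap.add_apply, LinearMap.smulRight_apply, Module.Basis.coord_apply]
      have hgapp : ∀ y : H, g y = y - (e.repr y j0) • (a • e0) := by
        intro y
        simp [hg, LinearMap.add_apply, LinearMap.smulRight_apply, Module.Basis.coord_apply,
          sub_eq_add_neg]
      have hre0 : e.repr e0 j0 = 0 := hrepr0 j0 hj0ne
      have hreprf : ∀ y : H, e.repr (f y) j0 = e.repr y j0 := by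
        intro y
        rw [hfapp, map_add, map_smul, Finsupp.add_apply, Finsupp.smul_apply, map_smul,
          Finsupp.smul_apply, hre0]
        simp
      have hreprg : ∀ y : H, e.repr (g y) j0 = e.repr y j0 := by
        intro y
        rw [hgapp, map_sub, map_smul, Finsupp.sub_apply, Finsupp.smul_apply, map_smul,
          Finsupp.smul_apply, hre0]
        simp
      have hfg : f ∘ₗ g = LinearMap.id := by
        apply LinearMap.ext; intro y
        simp only [LinearMap.comp_apply, LinearMap.id_apply]
        rw [hfapp, hreprg, hgapp]
        abel
      have hgf : g ∘ₗ f = LinearMap.id := by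
        apply LinearMap.ext; intro y
        simp only [LinearMap.comp_apply, LinearMap.id_apply]
        rw [hgapp, hreprf, hfapp]
        abel
      set φ : H ≃ₗ[ℂ] H := LinearEquiv.ofLinear f g hfg hgf with hφ
      have hbrf : ∀ y z : H, f ⁅y, z⁆ = ⁅f y, f z⁆ := by
        intro y z
        obtain ⟨c, hcc⟩ := hspanxy y z
        have hl : f ⁅y, z⁆ = ⁅y, z⁆ := by
          rw [hfapp, hcc, map_smul, Finsupp.smul_apply, hre0]
          simp
        rw [hl, hfapp y, hfapp z]
        simp only [add_lie, lie_add, smul_lie, lie_smul, hc, hc', smul_zero, zero_add,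
          add_zero]
      refine ⟨mkLieEquiv φ hbrf, ?_⟩
      show T x = φ x
      show T x = f x
      rw [hTx, hfapp, smul_smul]
      have : e.repr x j0 * a = e.repr x i0 := by
        rw [ha, mul_div_cancel₀ _ hj0]
      rw [this]
  · rintro ⟨-, hm⟩
    have hm1 : ((-1:ℤ)).natAbs ≤ n := by omega
    have hp1 : ((1:ℤ)).natAbs ≤ n := by omega
    have hb : ⁅e ⟨-1, hm1⟩, e ⟨1, hp1⟩⁆ = e0 := hbr 1 le_rfl (by exact_mod_cast hn)
    have h1 := hm (e ⟨-1, hm1⟩) (e ⟨1, hp1⟩)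
    rw [hb, hT0', hT ⟨-1, hm1⟩ (show (-1:ℤ) ≠ 0 by norm_num),
      hT ⟨1, hp1⟩ (show (1:ℤ) ≠ 0 by norm_num), hb] at h1
    have h2 : e0 + e0 = e0 := by rw [← two_smul ℂ e0]; exact h1
    exact e.ne_zero i0 (add_eq_left.mp h2)
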